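/- arXiv:1205.2525 — 2 statements merged into one kernel-verified Lean document; each statement's English description precedes it below -/
import Mathlib

section
/- Assume the CZ-decomposition setting in dimension n, with a parameter A ≥ 1 and a choice of representative x(S) ∈ S for each cluster S. There exists A₀ ≥ 1 depending only on n such that for every A ≥ A₀ the following holds: let S be a cluster, let Q(S) ∈ CZ be the cube containing x(S), let Q ∈ CZ, and let x ∈ (1+c_G)Q ∩ H(S). Then (1/2)·A^{−1}·(|x − x(S)| + δ_{Q(S)}) ≤ δ_Q ≤ A·(|x − x(S)| + δ_{Q(S)}). -/
noncomputable section

/-- The constant `c_G = 10⁻⁶`. -/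
def cG : ℝ := 1 / 1000000

/-- A cube `Q = {a} + (−δ, δ]ⁿ` with center `c = a` and half-sidelength `d = δ`
(so the sidelength of `Q` is `2d`). -/
structure Cube (n : ℕ) where
  c : Fin n → ℝ
  d : ℝ

namespace Cube

/-- The cube as a subset of `ℝⁿ`. -/
def toSet {n : ℕ} (Q : Cube n) : Set (Fin n → ℝ) :=
  {x | ∀ i, Q.c i - Q.d < x i ∧ x i ≤ Q.c i + Q.d}

/-- The sidelength `δ_Q` of a cube. -/
def side {n : ℕ} (Q : Cube n) : ℝ := 2 * Q.d

/-- The dilate `tQ`: same center, sidelength `t·δ_Q`. -/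
def scale {n : ℕ} (t : ℝ) (Q : Cube n) : Cube n := ⟨Q.c, t * Q.d⟩

/-- `Q` is a dyadic cube `∏ᵢ (jᵢ·2^k, (jᵢ+1)·2^k]`. -/
def Dyadic {n : ℕ} (Q : Cube n) : Prop :=
  ∃ k : ℤ, ∃ j : Fin n → ℤ, Q.d = (2 : ℝ) ^ k / 2 ∧
    ∀ i, Q.c i = ((j i : ℝ) + 1 / 2) * (2 : ℝ) ^ k

end Cube

/-- The CZ-decomposition setting: a partition `CZ` of `ℝⁿ` into dyadic cubes with
good geometry, and a finite set `E` with `#E ≥ 2` and `#(E ∩ 9Q) ≥ 2` for all `Q ∈ CZ`. -/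
structure CZSetting (n : ℕ) where
  CZ : Set (Cube n)
  E : Finset (Fin n → ℝ)
  dyadic : ∀ Q ∈ CZ, Q.Dyadic
  partition : ∀ x : Fin n → ℝ, ∃! Q, Q ∈ CZ ∧ x ∈ Q.toSet
  goodGeom : ∀ Q ∈ CZ, ∀ Q' ∈ CZ,
    ((Q.scale (1 + 10 * cG)).toSet ∩ (Q'.scale (1 + 10 * cG)).toSet).Nonempty →
      Q.side / 64 ≤ Q'.side ∧ Q'.side ≤ 64 * Q.side
  two_le_card : 2 ≤ E.card
  dense : ∀ Q ∈ CZ, 2 ≤ ((E : Set (Fin n → ℝ)) ∩ (Q.scale 9).toSet).ncard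

/-- `S` is a cluster of `E` (with parameter `A`): `S ⊆ E`, `#S ≥ 2` and
`dist(S, E∖S) ≥ A³·diam S` (with the convention `dist(S,∅) = +∞`). -/
def IsCluster {n : ℕ} (A : ℝ) (E S : Finset (Fin n → ℝ)) : Prop :=
  S ⊆ E ∧ 2 ≤ S.card ∧
  ∀ x ∈ S, ∀ y ∈ E \ S, A ^ 3 * Metric.diam (S : Set (Fin n → ℝ)) ≤ dist x y

/-- `Q` is interstellar: `diam(A¹⁰Q ∩ E) ≤ A⁻¹⁰·δ_Q` and `(1+3c_G)Q ∩ E = ∅`. -/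
def Interstellar {n : ℕ} (A : ℝ) (E : Finset (Fin n → ℝ)) (Q : Cube n) : Prop :=
  Metric.diam ((Q.scale (A ^ 10)).toSet ∩ (E : Set (Fin n → ℝ))) ≤ (A ^ 10)⁻¹ * Q.side ∧
  (Q.scale (1 + 3 * cG)).toSet ∩ (E : Set (Fin n → ℝ)) = ∅

/-- The halo `H(S)` of a cluster `S` with representative `xS`:
`{x : A·diam S < |x − xS| < A⁻¹·dist(S, E∖S)}` (with `dist(S,∅) = +∞`). -/
def Halo {n : ℕ} (A : ℝ) (E S : Finset (Fin n → ℝ)) (xS : Fin n → ℝ) :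
    Set (Fin n → ℝ) :=
  {x | A * Metric.diam (S : Set (Fin n → ℝ)) < dist x xS ∧
    ∀ y ∈ S, ∀ z ∈ E \ S, A * dist x xS < dist y z}

/-- `Q` is a keystone cube of `CZ`: every `Q' ∈ CZ` meeting `100Q` is at least as big. -/
def Keystone {n : ℕ} (CZ : Set (Cube n)) (Q : Cube n) : Prop :=
  Q ∈ CZ ∧ ∀ Q' ∈ CZ, (Q'.toSet ∩ (Q.scale 100).toSet).Nonempty → Q.side ≤ Q'.side

set_option linter.unusedVariables false

-- auxiliary lemmas
lemma CZ_d_pos {n : ℕ} (S : CZSetting n) {Q : Cube n} (hQ : Q ∈ S.CZ) : 0 < Q.d := by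
  obtain ⟨k, j, hk, -⟩ := S.dyadic Q hQ
  rw [hk]; positivity

lemma mem_scale_mono {n : ℕ} {Q : Cube n} {t t' : ℝ} (hd : 0 ≤ Q.d) (h : t ≤ t')
    {x : Fin n → ℝ} (hx : x ∈ (Q.scale t).toSet) : x ∈ (Q.scale t').toSet := by
  intro i
  obtain ⟨h1, h2⟩ := hx i
  simp only [Cube.scale] at *
  constructor <;> nlinarith [mul_le_mul_of_nonneg_right h hd]

lemma mem_scale_of_mem {n : ℕ} {Q : Cube n} {t : ℝ} (hd : 0 ≤ Q.d) (h : 1 ≤ t)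
    {x : Fin n → ℝ} (hx : x ∈ Q.toSet) : x ∈ (Q.scale t).toSet := by
  intro i
  obtain ⟨h1, h2⟩ := hx i
  simp only [Cube.scale]
  constructor <;> nlinarith [mul_le_mul_of_nonneg_right h hd]

/-- Key comparison lemma from good geometry. -/
lemma side_le_side {n : ℕ} (S : CZSetting n) {Q Q' : Cube n} (hQ : Q ∈ S.CZ) (hQ' : Q' ∈ S.CZ)
    {x x' : Fin n → ℝ} (hx : x ∈ (Q.scale (1 + cG)).toSet)
    (hx' : x' ∈ (Q'.scale (1 + cG)).toSet) :
    Q.side ≤ (2000000 / 9) * (dist x x' + Q'.side) := by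
  have hcG : cG = 1 / 1000000 := rfl
  have hd : 0 < Q.d := CZ_d_pos S hQ
  have hd' : 0 < Q'.d := CZ_d_pos S hQ'
  by_cases hcase : dist x x' + 2 * Q'.d < 9 * cG * Q.d
  · exfalso
    have hD : dist x x' < 9 * cG * Q.d := by linarith
    have hx'Q : x' ∈ (Q.scale (1 + 10 * cG)).toSet := by
      intro i
      obtain ⟨h1, h2⟩ := hx i
      simp only [Cube.scale] at h1 h2 ⊢
      have hi : dist (x i) (x' i) ≤ dist x x' := dist_le_pi_dist x x' i
      rw [Real.dist_eq, abs_le] at hi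
      obtain ⟨hi1, hi2⟩ := hi
      rw [hcG] at h1 h2 hD ⊢
      exact ⟨by linarith, by linarith⟩
    have hx'Q' : x' ∈ (Q'.scale (1 + 10 * cG)).toSet :=
      mem_scale_mono hd'.le (by rw [hcG]; norm_num) hx'
    obtain ⟨h64, -⟩ := S.goodGeom Q hQ Q' hQ' ⟨x', hx'Q, hx'Q'⟩
    have hs : Q.side = 2 * Q.d := rfl
    have hs' : Q'.side = 2 * Q'.d := rfl
    rw [hs, hs'] at h64
    rw [hcG] at hcase
    nlinarith [dist_nonneg (x := x) (y := x')]
  · push_neg at hcase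
    have : Q'.side = 2 * Q'.d := rfl
    have : Q.side = 2 * Q.d := rfl
    rw [hcG] at hcase
    nlinarith [dist_nonneg (x := x) (y := x')]

lemma dist_le_nine_side {n : ℕ} {Q : Cube n} (hd : 0 ≤ Q.d) {x y : Fin n → ℝ}
    (hx : x ∈ (Q.scale 9).toSet) (hy : y ∈ (Q.scale 9).toSet) :
    dist x y ≤ 9 * Q.side := by
  have h9 : 9 * Q.side = 18 * Q.d := by rw [Cube.side]; ring
  rw [h9, dist_pi_le_iff (by linarith)]
  intro i
  obtain ⟨hx1, hx2⟩ := hx i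
  obtain ⟨hy1, hy2⟩ := hy i
  simp only [Cube.scale] at hx1 hx2 hy1 hy2
  rw [Real.dist_eq, abs_le]
  constructor <;> linarith

/-- **Lemma 5.6 (Lemma 2): sidelength of CZ cubes meeting a halo.** -/
theorem statement12 (n : ℕ) (hn : 1 ≤ n) :
    ∃ A₀ : ℝ, 1 ≤ A₀ ∧ ∀ A : ℝ, A₀ ≤ A →
      ∀ (S : CZSetting n) (xR : Finset (Fin n → ℝ) → (Fin n → ℝ)),
        (∀ T : Finset (Fin n → ℝ), IsCluster A S.E T → xR T ∈ T) →
        ∀ T : Finset (Fin n → ℝ), IsCluster A S.E T →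
        ∀ QS ∈ S.CZ, xR T ∈ QS.toSet →
        ∀ Q ∈ S.CZ, ∀ x ∈ (Q.scale (1 + cG)).toSet ∩ Halo A S.E T (xR T),
          (1 / 2) * A⁻¹ * (dist x (xR T) + QS.side) ≤ Q.side ∧
          Q.side ≤ A * (dist x (xR T) + QS.side) := by
  refine ⟨10000000, by norm_num, ?_⟩
  intro A hA S xR hxR T hT QS hQS hxT Q hQ x hx
  obtain ⟨hxQ, hxH⟩ := hx
  simp only [Halo, Set.mem_setOf_eq] at hxH
  obtain ⟨hhd, hhs⟩ := hxH
  have hxTT : xR T ∈ T := hxR T hT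
  have hdQ : 0 < Q.d := CZ_d_pos S hQ
  have hdQS : 0 < QS.d := CZ_d_pos S hQS
  have hsQ : Q.side = 2 * Q.d := rfl
  have hsQS : QS.side = 2 * QS.d := rfl
  have hA1 : (2:ℝ) ≤ A := by linarith
  have hA0 : (0:ℝ) < A := by linarith
  have hD0 : 0 ≤ dist x (xR T) := dist_nonneg
  have hxTs : xR T ∈ (QS.scale (1 + cG)).toSet :=
    mem_scale_of_mem hdQS.le (by norm_num [cG]) hxT
  have hup : Q.side ≤ (2000000 / 9) * (dist x (xR T) + QS.side) :=
    side_le_side S hQ hQS hxQ hxTs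
  have hlow0 : QS.side ≤ (2000000 / 9) * (dist x (xR T) + Q.side) := by
    have h := side_le_side S hQS hQ hxTs hxQ
    rwa [dist_comm (xR T) x] at h
  -- D ≤ 18 * Q.side using density of E near Q and the halo conditions
  have hM := S.dense Q hQ
  have hMne : ((S.E : Set (Fin n → ℝ)) ∩ (Q.scale 9).toSet).Nonempty := by
    rcases ((S.E : Set (Fin n → ℝ)) ∩ (Q.scale 9).toSet).eq_empty_or_nonempty with h | h
    · rw [h] at hM; simp at hM
    · exact h
  have hx9 : x ∈ (Q.scale 9).toSet := mem_scale_mono hdQ.le (by norm_num [cG]) hxQ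
  have hDle : dist x (xR T) ≤ 18 * Q.side := by
    by_cases hex : ∃ e ∈ (S.E : Set (Fin n → ℝ)) ∩ (Q.scale 9).toSet, e ∉ T
    · obtain ⟨e, heM, heT⟩ := hex
      have heE : e ∈ S.E \ T := Finset.mem_sdiff.mpr ⟨by exact_mod_cast heM.1, heT⟩
      have h1 : A * dist x (xR T) < dist (xR T) e := hhs (xR T) hxTT e heE
      have h2 : dist (xR T) e ≤ dist x (xR T) + 9 * Q.side := by
        have h3 := dist_le_nine_side hdQ.le hx9 heM.2
        calc dist (xR T) e ≤ dist (xR T) x + dist x e := dist_triangle _ _ _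
          _ ≤ dist x (xR T) + 9 * Q.side := by rw [dist_comm (xR T) x]; linarith
      nlinarith [mul_nonneg (by linarith : (0:ℝ) ≤ A - 2) hD0]
    · push_neg at hex
      obtain ⟨e, heM⟩ := hMne
      have heT : e ∈ T := hex e heM
      have hbd : Bornology.IsBounded (T : Set (Fin n → ℝ)) := T.finite_toSet.isBounded
      have h1 : dist e (xR T) ≤ Metric.diam (T : Set (Fin n → ℝ)) :=
        Metric.dist_le_diam_of_mem hbd heT hxTT
      have h2 : dist x (xR T) ≤ dist x e + dist e (xR T) := dist_triangle _ _ _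
      have h3 := dist_le_nine_side hdQ.le hx9 heM.2
      have hdm0 : 0 ≤ Metric.diam (T : Set (Fin n → ℝ)) := Metric.diam_nonneg
      nlinarith [mul_nonneg (by linarith : (0:ℝ) ≤ A - 2) hdm0]
  constructor
  · -- lower bound
    have h2A : 2 * 10000000 * Q.side ≤ 2 * A * Q.side := by
      nlinarith [mul_nonneg (by linarith : (0:ℝ) ≤ A - 10000000) (by linarith : (0:ℝ) ≤ Q.side)]
    have key : dist x (xR T) + QS.side ≤ 2 * A * Q.side := by linarith
    calc (1/2) * A⁻¹ * (dist x (xR T) + QS.side)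
        ≤ (1/2) * A⁻¹ * (2 * A * Q.side) := by
          apply mul_le_mul_of_nonneg_left key (by positivity)
      _ = Q.side := by field_simp
  · -- upper bound
    have h0 : 0 ≤ dist x (xR T) + QS.side := by linarith
    have hAK : (2000000 / 9) * (dist x (xR T) + QS.side) ≤ A * (dist x (xR T) + QS.side) :=
      mul_le_mul_of_nonneg_right (by linarith) h0
    linarith
end
end

section
/- Assume the CZ-decomposition setting in dimension n, with a parameter A ≥ 1 and a choice of representative x(S) ∈ S for each cluster S; moreover, for each cluster S and each Q ∈ CZ with Q ∩ H(S) ≠ ∅, fix a point x(Q,S) ∈ Q ∩ H(S). There exist A₀ ≥ 1 and C > 0 depending only on n such that for every A ≥ A₀ the following holds: for any cluster S, letting Q(S) ∈ CZ be the cube containing x(S), and for any R ≥ δ_{Q(S)}, the number of cubes Q ∈ CZ with Q ∩ H(S) ≠ ∅ and |x(Q,S) − x(S)| ≤ R is at most C·A^{2n}·(R/δ_{Q(S)})^n. -/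
noncomputable section

/-!
Every cube `Q ∈ CZ` meeting the halo of `S` is not much smaller than `Q(S)`. If the chosen point
`x ∈ Q ∩ H(S)` is very close to `x(S)`, then `(1 + 10 c_G)Q` meets `(1 + 10 c_G)Q(S)` and good
geometry applies. Otherwise pick `z ∈ E ∩ 9Q`: if `z ∈ S`, then `|x − x(S)| ≤ |x − z| + diam S`
and `diam S < |x − x(S)| / A`; if `z ∉ S`, then `A |x − x(S)| < |z − x(S)| ≤ |x − x(S)| + |x − z|`.
Either way `|x − x(S)| ≲ δ_Q`, so `δ_Q ≳ c_G δ_{Q(S)}`. The counted cubes are disjoint, have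
sidelength `≳ c_G δ_{Q(S)}` and meet the ball of radius `R` about `x(S)`, so a volume comparison
bounds their number by `C (R / δ_{Q(S)})ⁿ`.
-/

open MeasureTheory Set Metric ENNReal

theorem MeasureTheory.encard_mul_le_measure_of_pairwiseDisjoint {ι α : Type*}
    [MeasurableSpace α] (μ : Measure α) {F : Set ι} {s : ι → Set α} {B : Set α} {ε : ℝ≥0∞}
    (hd : F.PairwiseDisjoint s) (hs : ∀ i ∈ F, MeasurableSet (s i)) (hB : ∀ i ∈ F, s i ⊆ B)
    (hε : ∀ i ∈ F, ε ≤ μ (s i)) : (F.encard : ℝ≥0∞) * ε ≤ μ B :=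
  calc (F.encard : ℝ≥0∞) * ε
      = ∑' _ : F, ε := (ENNReal.tsum_set_const F ε).symm
    _ ≤ ∑' i : F, μ (s i) := ENNReal.tsum_le_tsum fun i => hε i i.2
    _ ≤ μ (⋃ i : F, s i) := tsum_meas_le_meas_iUnion_of_disjoint μ (fun i => hs i i.2)
        fun i j hij => hd i.2 j.2 (Subtype.coe_injective.ne hij)
    _ ≤ μ B := measure_mono (iUnion_subset fun i => hB i i.2)

theorem Real.ofReal_le_volume_Ioc_inter_closedBall {a b x m : ℝ} (hm0 : 0 ≤ m)
    (hm : m ≤ b - a) (hx : x ∈ Ioc a b) :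
    ENNReal.ofReal m ≤ volume (Ioc a b ∩ closedBall x m) := by
  set l := min x (b - m)
  have hsub : Ioc l (l + m) ⊆ Ioc a b ∩ closedBall x m := by
    have hl₁ : l ≤ x := min_le_left _ _
    have hl₂ : l ≤ b - m := min_le_right _ _
    have hl₃ : x - m ≤ l := le_min (by linarith) (by linarith [hx.2])
    have hl₄ : a ≤ l := le_min hx.1.le (by linarith)
    rintro y ⟨hly, hyl⟩
    rw [Real.closedBall_eq_Icc]
    exact ⟨⟨by linarith [hx.1], by linarith⟩, by linarith, by linarith⟩
  calc ENNReal.ofReal m = volume (Ioc l (l + m)) := by rw [Real.volume_Ioc, add_sub_cancel_left]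
    _ ≤ _ := measure_mono hsub

namespace Cube

variable {n : ℕ}

theorem toSet_eq_pi (Q : Cube n) :
    Q.toSet = pi univ fun i => Ioc (Q.c i - Q.d) (Q.c i + Q.d) := by
  ext x
  simp [toSet, mem_pi, mem_Ioc]

theorem measurableSet_toSet (Q : Cube n) : MeasurableSet Q.toSet := by
  rw [toSet_eq_pi]
  exact MeasurableSet.univ_pi fun _ => measurableSet_Ioc

theorem Dyadic.d_pos {Q : Cube n} (h : Q.Dyadic) : 0 < Q.d := by
  obtain ⟨k, j, hk, -⟩ := h
  rw [hk]
  positivity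

theorem dist_le_side {Q : Cube n} {x y : Fin n → ℝ} (hd : 0 ≤ Q.d) (hx : x ∈ Q.toSet)
    (hy : y ∈ Q.toSet) : dist x y ≤ Q.side := by
  rw [side, dist_pi_le_iff (by linarith)]
  intro i
  rw [Real.dist_eq, abs_le]
  constructor <;> linarith [hx i, hy i]

theorem mem_scale_of_mem {Q : Cube n} {x : Fin n → ℝ} {t : ℝ} (ht : 1 ≤ t) (hd : 0 ≤ Q.d)
    (hx : x ∈ Q.toSet) : x ∈ (Q.scale t).toSet := by
  have hdt : Q.d ≤ t * Q.d := le_mul_of_one_le_left hd ht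
  exact fun i => ⟨by simp only [scale]; linarith [hx i], by simp only [scale]; linarith [hx i]⟩

theorem mem_scale_of_dist_le {Q : Cube n} {x y : Fin n → ℝ} {s : ℝ} (hy : y ∈ Q.toSet)
    (hxy : dist x y ≤ s * Q.d) : x ∈ (Q.scale (1 + s)).toSet := by
  intro i
  have hi := abs_le.mp ((Real.dist_eq _ _).symm.trans_le ((dist_le_pi_dist x y i).trans hxy))
  simp only [scale]
  constructor <;> linarith [hy i]

theorem ofReal_pow_le_volume_inter_closedBall {Q : Cube n} {x : Fin n → ℝ} {m : ℝ} (hm0 : 0 ≤ m)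
    (hm : m ≤ Q.side) (hx : x ∈ Q.toSet) :
    ENNReal.ofReal m ^ n ≤ volume (Q.toSet ∩ closedBall x m) := by
  rw [toSet_eq_pi, closedBall_pi x hm0, ← pi_inter_distrib, volume_pi_pi]
  calc ENNReal.ofReal m ^ n = ∏ _i : Fin n, ENNReal.ofReal m := by simp
    _ ≤ _ := Finset.prod_le_prod' fun i _ =>
        Real.ofReal_le_volume_Ioc_inter_closedBall hm0 (by rw [side] at hm; linarith) (hx i)

theorem finite_and_ncard_mul_pow_le {F : Set (Cube n)} (hF : F.PairwiseDisjoint toSet) {m R : ℝ}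
    (hm : 0 < m) (hmR : m ≤ R) (y : Fin n → ℝ) (hside : ∀ Q ∈ F, m ≤ Q.side)
    (hnear : ∀ Q ∈ F, ∃ x ∈ Q.toSet, dist x y ≤ R) :
    F.Finite ∧ (F.ncard : ℝ) * m ^ n ≤ (4 * R) ^ n := by
  have hvol : (F.encard : ℝ≥0∞) * ENNReal.ofReal m ^ n ≤ ENNReal.ofReal ((4 * R) ^ n) := by
    calc (F.encard : ℝ≥0∞) * ENNReal.ofReal m ^ n ≤ volume (closedBall y (2 * R)) :=
          encard_mul_le_measure_of_pairwiseDisjoint volume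
            (hF.mono fun _ => inter_subset_left)
            (fun Q _ => Q.measurableSet_toSet.inter isClosed_closedBall.measurableSet)
            (fun _ _ => inter_subset_right) fun Q hQ => by
              obtain ⟨x, hx, hxy⟩ := hnear Q hQ
              exact (ofReal_pow_le_volume_inter_closedBall hm.le (hside Q hQ) hx).trans
                (measure_mono (inter_subset_inter_right _
                  (closedBall_subset_closedBall' (by linarith))))
      _ = ENNReal.ofReal ((4 * R) ^ n) := by
          rw [Real.volume_pi_closedBall _ (by linarith), Fintype.card_fin]
          ring_nf
  have hfin : F.Finite := by
    refine encard_ne_top_iff.mp fun htop => ?_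
    rw [htop, ENat.toENNReal_top, top_mul (pow_ne_zero _ (ENNReal.ofReal_pos.mpr hm).ne')] at hvol
    exact ENNReal.ofReal_ne_top (top_le_iff.mp hvol)
  refine ⟨hfin, ?_⟩
  rw [← hfin.cast_ncard_eq, ENat.toENNReal_coe, ← ENNReal.ofReal_natCast,
    ← ENNReal.ofReal_pow hm.le, ← ENNReal.ofReal_mul (Nat.cast_nonneg _)] at hvol
  exact (ENNReal.ofReal_le_ofReal_iff (pow_nonneg (by linarith) _)).mp hvol

end Cube

theorem dist_lt_two_mul_of_mem_halo {n : ℕ} {A r : ℝ} (hA : 2 ≤ A) {E T : Finset (Fin n → ℝ)}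
    {xS x z : Fin n → ℝ} (hxS : xS ∈ T) (hx : x ∈ Halo A E T xS) (hz : z ∈ E)
    (hxz : dist x z ≤ r) : dist x xS < 2 * r := by
  have hd := dist_nonneg (x := x) (y := xS)
  by_cases hzT : z ∈ T
  · have hdiam : 2 * diam (T : Set (Fin n → ℝ)) < dist x xS :=
      (mul_le_mul_of_nonneg_right hA diam_nonneg).trans_lt hx.1
    have hzxS := dist_le_diam_of_mem T.finite_toSet.isBounded (Finset.mem_coe.2 hzT)
      (Finset.mem_coe.2 hxS)
    linarith [dist_triangle x z xS]
  · have hfar := hx.2 xS hxS z (Finset.mem_sdiff.2 ⟨hz, hzT⟩)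
    have hAd : 2 * dist x xS ≤ A * dist x xS := mul_le_mul_of_nonneg_right hA hd
    linarith [dist_triangle xS x z, dist_comm x xS]

namespace CZSetting

variable {n : ℕ} (S : CZSetting n)

theorem pairwiseDisjoint : S.CZ.PairwiseDisjoint Cube.toSet := by
  intro Q hQ Q' hQ' hne
  refine disjoint_left.2 fun z hz hz' => hne ?_
  obtain ⟨_, -, huniq⟩ := S.partition z
  exact (huniq Q ⟨hQ, hz⟩).trans (huniq Q' ⟨hQ', hz'⟩).symm

theorem exists_mem_E_dist_le {Q : Cube n} (hQ : Q ∈ S.CZ) {x : Fin n → ℝ} (hx : x ∈ Q.toSet) :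
    ∃ z ∈ S.E, dist x z ≤ 9 * Q.side := by
  have hd := (S.dyadic Q hQ).d_pos
  obtain ⟨z, hzE, hz9⟩ := nonempty_of_ncard_ne_zero (s := (S.E : Set (Fin n → ℝ)) ∩ _)
    (by linarith [S.dense Q hQ])
  refine ⟨z, hzE, ?_⟩
  have := Cube.dist_le_side (by simp only [Cube.scale]; linarith)
    (Cube.mem_scale_of_mem (by norm_num) hd.le hx) hz9
  simpa only [Cube.side, Cube.scale, mul_left_comm] using this

theorem side_div_le_of_dist_le {Q Q' : Cube n} (hQ : Q ∈ S.CZ) (hQ' : Q' ∈ S.CZ)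
    {x y : Fin n → ℝ} (hx : x ∈ Q.toSet) (hy : y ∈ Q'.toSet) (hxy : dist x y ≤ 5 * cG * Q'.side) :
    Q'.side / 64 ≤ Q.side := by
  have hx' : x ∈ (Q'.scale (1 + 10 * cG)).toSet :=
    Cube.mem_scale_of_dist_le hy (by rw [Cube.side] at hxy; linarith)
  have hx'' : x ∈ (Q.scale (1 + 10 * cG)).toSet :=
    Cube.mem_scale_of_mem (by norm_num [cG]) (S.dyadic Q hQ).d_pos.le hx
  exact (S.goodGeom Q' hQ' Q hQ ⟨x, hx', hx''⟩).1

theorem side_le_of_mem_halo {A : ℝ} (hA : 2 ≤ A) {T : Finset (Fin n → ℝ)} {Q QS : Cube n}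
    {xS x : Fin n → ℝ} (hQ : Q ∈ S.CZ) (hQS : QS ∈ S.CZ) (hxSQS : xS ∈ QS.toSet) (hxS : xS ∈ T)
    (hx : x ∈ Q.toSet ∩ Halo A S.E T xS) : cG / 4 * QS.side ≤ Q.side := by
  have hQSd := (S.dyadic QS hQS).d_pos
  by_cases hnear : dist x xS ≤ 5 * cG * QS.side
  · have := S.side_div_le_of_dist_le hQ hQS hx.1 hxSQS hnear
    simp only [Cube.side, cG] at this ⊢
    linarith
  · obtain ⟨z, hzE, hxz⟩ := S.exists_mem_E_dist_le hQ hx.1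
    have := dist_lt_two_mul_of_mem_halo hA hxS hx.2 hzE hxz
    simp only [Cube.side, cG] at hnear this ⊢
    linarith

end CZSetting

theorem statement14_general (n : ℕ) :
    ∃ A₀ C : ℝ, 1 ≤ A₀ ∧ 0 < C ∧
      ∀ A : ℝ, A₀ ≤ A →
      ∀ (S : CZSetting n) (xR : Finset (Fin n → ℝ) → (Fin n → ℝ))
        (xQS : Cube n → Finset (Fin n → ℝ) → (Fin n → ℝ)),
        (∀ T : Finset (Fin n → ℝ), IsCluster A S.E T → xR T ∈ T) →
        (∀ Q ∈ S.CZ, ∀ T : Finset (Fin n → ℝ), IsCluster A S.E T →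
          (Q.toSet ∩ Halo A S.E T (xR T)).Nonempty →
          xQS Q T ∈ Q.toSet ∩ Halo A S.E T (xR T)) →
        ∀ T : Finset (Fin n → ℝ), IsCluster A S.E T →
        ∀ QS ∈ S.CZ, xR T ∈ QS.toSet →
        ∀ R : ℝ, QS.side ≤ R →
          {Q ∈ S.CZ | (Q.toSet ∩ Halo A S.E T (xR T)).Nonempty ∧
            dist (xQS Q T) (xR T) ≤ R}.Finite ∧
          ({Q ∈ S.CZ | (Q.toSet ∩ Halo A S.E T (xR T)).Nonempty ∧
            dist (xQS Q T) (xR T) ≤ R}.ncard : ℝ) ≤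
            C * A ^ (2 * n) * (R / QS.side) ^ n := by
  refine ⟨2, 16000000 ^ n, one_le_two, by positivity, ?_⟩
  intro A hA S xR xQS hxR hxQS T hT QS hQS hxRQS R hR
  have hQS_pos : 0 < QS.side := by rw [Cube.side]; linarith [(S.dyadic QS hQS).d_pos]
  have hm : 0 < cG / 4 * QS.side := by norm_num [cG]; linarith
  set F := {Q ∈ S.CZ | (Q.toSet ∩ Halo A S.E T (xR T)).Nonempty ∧ dist (xQS Q T) (xR T) ≤ R}
  obtain ⟨hfin, hcard⟩ := Cube.finite_and_ncard_mul_pow_le (F := F) (R := R)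
    (S.pairwiseDisjoint.subset fun Q hQ => hQ.1) hm (by norm_num [cG]; linarith) (xR T)
    (fun Q hQ => S.side_le_of_mem_halo hA hQ.1 hQS hxRQS (hxR T hT) (hxQS Q hQ.1 T hT hQ.2.1))
    fun Q hQ => ⟨xQS Q T, (hxQS Q hQ.1 T hT hQ.2.1).1, hQ.2.2⟩
  refine ⟨hfin, ?_⟩
  calc _ ≤ (4 * R) ^ n / (cG / 4 * QS.side) ^ n := (le_div_iff₀ (pow_pos hm n)).2 hcard
    _ = 16000000 ^ n * (R / QS.side) ^ n := by
        rw [← div_pow, ← mul_pow, cG]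
        field_simp
        ring
    _ ≤ 16000000 ^ n * A ^ (2 * n) * (R / QS.side) ^ n := by
        have hRQS : 0 ≤ R / QS.side := div_nonneg (by linarith) hQS_pos.le
        gcongr
        exact le_mul_of_one_le_right (by positivity) (one_le_pow₀ (by linarith))

/-- **Lemma 5.11 (Lemma 7): counting CZ cubes meeting a halo within radius `R`.** -/
theorem statement14 (n : ℕ) (hn : 1 ≤ n) :
    ∃ A₀ C : ℝ, 1 ≤ A₀ ∧ 0 < C ∧
      ∀ A : ℝ, A₀ ≤ A →
      ∀ (S : CZSetting n) (xR : Finset (Fin n → ℝ) → (Fin n → ℝ))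
        (xQS : Cube n → Finset (Fin n → ℝ) → (Fin n → ℝ)),
        (∀ T : Finset (Fin n → ℝ), IsCluster A S.E T → xR T ∈ T) →
        (∀ Q ∈ S.CZ, ∀ T : Finset (Fin n → ℝ), IsCluster A S.E T →
          (Q.toSet ∩ Halo A S.E T (xR T)).Nonempty →
          xQS Q T ∈ Q.toSet ∩ Halo A S.E T (xR T)) →
        ∀ T : Finset (Fin n → ℝ), IsCluster A S.E T →
        ∀ QS ∈ S.CZ, xR T ∈ QS.toSet →
        ∀ R : ℝ, QS.side ≤ R →
          {Q ∈ S.CZ | (Q.toSet ∩ Halo A S.E T (xR T)).Nonempty ∧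
            dist (xQS Q T) (xR T) ≤ R}.Finite ∧
          ({Q ∈ S.CZ | (Q.toSet ∩ Halo A S.E T (xR T)).Nonempty ∧
            dist (xQS Q T) (xR T) ≤ R}.ncard : ℝ) ≤
            C * A ^ (2 * n) * (R / QS.side) ^ n :=
  statement14_general n
end
end
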